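/- The independence complex of the path graph P_n on n vertices is homotopy equivalent to: a sphere S^{k-1} if n = 3k; a point if n = 3k+1; and a sphere S^k if n = 3k+2. -/

import Mathlib

open Function Set

/-- A set of vertices of a simple graph is independent if its elements are
pairwise non-adjacent.  The independence complex `Ind G` is the simplicial
complex whose faces are exactly the independent sets. -/
def isIndepSet {V : Type*} (G : SimpleGraph V) (s : Set V) : Prop :=
  s.Pairwise fun a b => ¬ G.Adj a b

/-- Geometric realization of the subcomplex of the independence complex of `G`
consisting of the independent sets contained in `S` (so `S = univ` gives
`Ind G`, `S = {v}ᶜ` gives `Ind (G \ v)`, and `S = N[v]ᶜ` gives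
`Ind (G \ N[v])`): convex combinations of vertices whose support is a face. -/
def indRealizationIn {V : Type*} (G : SimpleGraph V) (S : Set V) : Set (V → ℝ) :=
  {f | (∀ v, 0 ≤ f v) ∧ (Function.support f).Finite ∧ Function.support f ⊆ S ∧
       isIndepSet G (Function.support f) ∧ ∑ᶠ v, f v = 1}

/-- Geometric realization of the independence complex `Ind G`. -/
def indRealization {V : Type*} (G : SimpleGraph V) : Set (V → ℝ) :=
  indRealizationIn G Set.univ

/-- The (unreduced) suspension of a topological space. -/
def Susp (X : Type*) [TopologicalSpace X] : Type _ :=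
  Quot (fun p q : X × unitInterval => (p.2 = 0 ∧ q.2 = 0) ∨ (p.2 = 1 ∧ q.2 = 1))

instance (X : Type*) [TopologicalSpace X] : TopologicalSpace (Susp X) :=
  inferInstanceAs (TopologicalSpace (Quot _))

/-- The wedge of two pointed topological spaces. -/
def WedgeAt (X Y : Type*) [TopologicalSpace X] [TopologicalSpace Y] (x₀ : X) (y₀ : Y) :
    Type _ :=
  Quot (fun p q : X ⊕ Y => p = Sum.inl x₀ ∧ q = Sum.inr y₀)

instance (X Y : Type*) [TopologicalSpace X] [TopologicalSpace Y] (x₀ : X) (y₀ : Y) :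
    TopologicalSpace (WedgeAt X Y x₀ y₀) :=
  inferInstanceAs (TopologicalSpace (Quot _))

/-- The sphere `S^{m-1}`, realized as the unit sphere of `ℝ^m`. -/
def sphere' (m : ℕ) : Set (EuclideanSpace ℝ (Fin m)) := Metric.sphere 0 1

/-- A wedge of two `m`-dimensional spheres: the two unit spheres of `ℝ^{m+1}`
centered at `±e₀`, which are tangent at the origin. -/
def sphereWedge (m : ℕ) : Set (EuclideanSpace ℝ (Fin (m + 1))) :=
  {x | dist x (EuclideanSpace.single (0 : Fin (m + 1)) (1 : ℝ)) = 1 ∨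
       dist x (-(EuclideanSpace.single (0 : Fin (m + 1)) (1 : ℝ))) = 1}

/-- The hexagonal line tiling graph `H_{1×1×n}`: two rows (row `j` carries the
vertices `v^{j+1}_1, …, v^{j+1}_{2n+1}`, column `i : Fin (2n+1)` being the
1-indexed vertex `v^{j+1}_{i+1}`), each row forming a path, together with the
rung edges `{v^1_{2t-1}, v^2_{2t-1}}`, i.e. rungs at even 0-indexed columns. -/
def hexRow (n : ℕ) : SimpleGraph (Fin 2 × Fin (2 * n + 1)) :=
  SimpleGraph.fromRel (fun p q =>
    (p.1 = q.1 ∧ (p.2 : ℕ) + 1 = (q.2 : ℕ)) ∨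
    (p.1 ≠ q.1 ∧ p.2 = q.2 ∧ (p.2 : ℕ) % 2 = 0))

/-- The last vertex `v^1_{2n+1}` of the top row of `H_{1×1×n}`. -/
def hexTop (n : ℕ) : Fin 2 × Fin (2 * n + 1) := (0, ⟨2 * n, by omega⟩)

/-- `X_n^{(1)} = H_{1×1×n} \ {v^1_{2n+1}}` : realization of its independence
complex, as the subcomplex of `Ind (H_{1×1×n})` of faces avoiding `v^1_{2n+1}`. -/
def Xn1 (n : ℕ) : Set (Fin 2 × Fin (2 * n + 1) → ℝ) :=
  indRealizationIn (hexRow n) ({hexTop n}ᶜ)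

/-- `X_n^{(2)} = H_{1×1×n} \ N[v^1_{2n+1}]` : realization of its independence
complex, as the subcomplex of `Ind (H_{1×1×n})` of faces avoiding `N[v^1_{2n+1}]`. -/
def Xn2 (n : ℕ) : Set (Fin 2 × Fin (2 * n + 1) → ℝ) :=
  indRealizationIn (hexRow n) ((insert (hexTop n) ((hexRow n).neighborSet (hexTop n)))ᶜ)

/-!
If `v` and `w` are non-adjacent and every neighbour of `v` is a neighbour of `w`, deleting `w`
does not change the homotopy type of the independence complex: pushing the weight of `w` onto
`v` is a retraction, and the straight line from a point to its image stays inside the complex.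
In `P_n` (vertices `0, …, n - 1`), once `2, 5, …, 3j - 1` are deleted the only neighbour of `3j`
is `3j + 1`, which is also a neighbour of `3j + 2`; so all vertices `≡ 2 mod 3` can be deleted.
What remains is the disjoint union of the edges `{3i, 3i + 1}`, plus the isolated vertex `n - 1`
when `n ≡ 1 mod 3`. An isolated vertex makes the complex a cone, hence contractible. Otherwise
the complex of `m` disjoint edges is the boundary `{x | ∑ |xᵢ| = 1}` of the cross-polytope in
`ℝ^m` (`x` corresponds to the weights `xᵢ⁺` on `3i` and `xᵢ⁻` on `3i + 1`), and radial
projection maps it onto `S^{m-1}`.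
-/

open ContinuousMap

section Realization

variable {V : Type*} {G : SimpleGraph V} {S T : Set V}

lemma finsum_pi_single {M : Type*} [AddCommMonoid M] [DecidableEq V] (v : V) (a : M) :
    ∑ᶠ u, Pi.single v a u = a := by
  rw [finsum_eq_single _ v fun u hu => by simp [hu], Pi.single_eq_same]

lemma indRealizationIn_mono (hST : S ⊆ T) : indRealizationIn G S ⊆ indRealizationIn G T :=
  fun _ ⟨hnonneg, hfin, hS, hind, hsum⟩ => ⟨hnonneg, hfin, hS.trans hST, hind, hsum⟩

lemma isIndepSet_insert {s : Set V} {a : V} (hs : isIndepSet G s) (ha : ∀ b ∈ s, ¬ G.Adj a b) :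
    isIndepSet G (insert a s) :=
  Set.pairwise_insert.2 ⟨hs, fun b hb _ => ⟨ha b hb, fun h => ha b hb h.symm⟩⟩

lemma isIndepSet_insert_of_dominated {v w : V} (hadj : ¬ G.Adj v w)
    (hdom : ∀ u ∈ S, G.Adj v u → G.Adj w u) {s : Set V} (hs : isIndepSet G s) (hsS : s ⊆ S)
    (hws : w ∈ s) : isIndepSet G (insert v s) := by
  refine isIndepSet_insert hs fun u hu hvu => ?_
  have hwu : w ≠ u := by rintro rfl; exact hadj hvu
  exact hs hws hu hwu (hdom u (hsS hu) hvu)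

lemma smul_add_smul_mem_indRealizationIn {f g : V → ℝ} (hf : f ∈ indRealizationIn G S)
    (hg : g ∈ indRealizationIn G S) (hfg : isIndepSet G (support f ∪ support g))
    {t : ℝ} (ht₀ : 0 ≤ t) (ht₁ : t ≤ 1) :
    (1 - t) • f + t • g ∈ indRealizationIn G S := by
  obtain ⟨hf₀, hf_fin, hfS, -, hf_sum⟩ := hf
  obtain ⟨hg₀, hg_fin, hgS, -, hg_sum⟩ := hg
  have hsupp : support ((1 - t) • f + t • g) ⊆ support f ∪ support g :=
    (support_add _ _).trans
      (union_subset_union (support_smul_subset_right _ _) (support_smul_subset_right _ _))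
  refine ⟨fun v => ?_, (hf_fin.union hg_fin).subset hsupp, hsupp.trans (union_subset hfS hgS),
    hfg.mono hsupp, ?_⟩
  · have := hf₀ v; have := hg₀ v
    simp only [Pi.add_apply, Pi.smul_apply, smul_eq_mul]
    nlinarith
  · simp only [Pi.add_apply, Pi.smul_apply, smul_eq_mul]
    rw [finsum_add_distrib, ← mul_finsum' _ _ hf_fin, ← mul_finsum' _ _ hg_fin, hf_sum, hg_sum]
    · ring
    · exact hf_fin.subset (support_mul_subset_right _ _)
    · exact hg_fin.subset (support_mul_subset_right _ _)

theorem homotopic_of_isIndepSet_union {X : Type*} [TopologicalSpace X]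
    (φ ψ : C(X, indRealizationIn G S))
    (h : ∀ x, isIndepSet G (support (φ x : V → ℝ) ∪ support (ψ x : V → ℝ))) :
    φ.Homotopic ψ :=
  ⟨{ toFun p :=
        ⟨(1 - (p.1 : ℝ)) • (φ p.2 : V → ℝ) + (p.1 : ℝ) • (ψ p.2 : V → ℝ),
          smul_add_smul_mem_indRealizationIn (φ p.2).2 (ψ p.2).2 (h p.2) p.1.2.1 p.1.2.2⟩
     continuous_toFun := by fun_prop
     map_zero_left x := by ext; simp
     map_one_left x := by ext; simp }⟩

theorem contractibleSpace_indRealizationIn_of_isolated {u : V} (hu : u ∈ S)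
    (hiso : ∀ x ∈ S, ¬ G.Adj u x) : ContractibleSpace (indRealizationIn G S) := by
  classical
  have hδ : support (Pi.single u (1 : ℝ)) ⊆ {u} := Pi.support_single_subset
  have hδ_mem : Pi.single u (1 : ℝ) ∈ indRealizationIn G S :=
    ⟨(Pi.single_nonneg.2 zero_le_one : (0 : V → ℝ) ≤ Pi.single u 1),
      (finite_singleton u).subset hδ, hδ.trans (singleton_subset_iff.2 hu),
      (subsingleton_singleton.anti hδ).pairwise _,
      finsum_pi_single u 1⟩
  rw [contractible_iff_id_nullhomotopic]
  refine ⟨⟨_, hδ_mem⟩, homotopic_of_isIndepSet_union _ _ fun f => ?_⟩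
  obtain ⟨-, -, hfS, hind, -⟩ := f.2
  refine (isIndepSet_insert hind fun x hx => hiso x (hfS hx)).mono ?_
  exact union_subset (subset_insert _ _) (hδ.trans (singleton_subset_iff.2 (mem_insert _ _)))

end Realization

section Fold

variable {V : Type*} [DecidableEq V] {G : SimpleGraph V} {S : Set V} {v w : V}

def foldMap (v w : V) (f : V → ℝ) : V → ℝ := f + Pi.single v (f w) - Pi.single w (f w)

lemma foldMap_apply_right (hvw : v ≠ w) (f : V → ℝ) : foldMap v w f w = 0 := by
  simp [foldMap, hvw]

lemma foldMap_apply_left (hvw : v ≠ w) (f : V → ℝ) : foldMap v w f v = f v + f w := by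
  simp [foldMap, hvw]

lemma foldMap_apply_of_ne {u : V} (huv : u ≠ v) (huw : u ≠ w) (f : V → ℝ) :
    foldMap v w f u = f u := by
  simp [foldMap, huv, huw]

lemma foldMap_of_eq_zero {f : V → ℝ} (hf : f w = 0) : foldMap v w f = f := by
  simp [foldMap, hf]

lemma continuous_foldMap : Continuous (foldMap v w) :=
  (continuous_id.add ((continuous_single v).comp (continuous_apply w))).sub
    ((continuous_single w).comp (continuous_apply w))

lemma support_foldMap_subset (hvw : v ≠ w) (f : V → ℝ) :
    support (foldMap v w f) ⊆ insert v (support f) \ {w} := by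
  intro u hu
  by_cases huw : u = w
  · subst huw; exact absurd (foldMap_apply_right hvw f) hu
  by_cases huv : u = v
  · exact ⟨.inl huv, huw⟩
  · exact ⟨.inr (by rwa [Function.mem_support, foldMap_apply_of_ne huv huw] at hu), huw⟩

lemma finsum_foldMap (f : V → ℝ) (hf : (support f).Finite) :
    ∑ᶠ u, foldMap v w f u = ∑ᶠ u, f u := by
  have hsingle (x : V) : (support (Pi.single x (f w))).Finite :=
    (finite_singleton x).subset Pi.support_single_subset
  simp only [foldMap, Pi.sub_apply, Pi.add_apply]
  rw [finsum_sub_distrib ((hf.union (hsingle v)).subset (support_add _ _)) (hsingle w),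
    finsum_add_distrib hf (hsingle v), finsum_pi_single, finsum_pi_single, add_sub_cancel_right]

lemma isIndepSet_union_support_foldMap (hvw : v ≠ w) (hadj : ¬ G.Adj v w)
    (hdom : ∀ u ∈ S, G.Adj v u → G.Adj w u) {f : V → ℝ}
    (hf : f ∈ indRealizationIn G S) :
    isIndepSet G (support (foldMap v w f) ∪ support f) := by
  obtain ⟨-, -, hfS, hind, -⟩ := hf
  by_cases hfw : f w = 0
  · rwa [foldMap_of_eq_zero hfw, union_self]
  · refine (isIndepSet_insert_of_dominated hadj hdom hind hfS hfw).mono ?_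
    exact union_subset ((support_foldMap_subset hvw f).trans sdiff_subset) (subset_insert _ _)

lemma foldMap_mem (hv : v ∈ S) (hvw : v ≠ w) (hadj : ¬ G.Adj v w)
    (hdom : ∀ u ∈ S, G.Adj v u → G.Adj w u) {f : V → ℝ}
    (hf : f ∈ indRealizationIn G S) :
    foldMap v w f ∈ indRealizationIn G (S \ {w}) := by
  have hind := isIndepSet_union_support_foldMap hvw hadj hdom hf
  obtain ⟨hf₀, hf_fin, hfS, -, hf_sum⟩ := hf
  have hsupp := support_foldMap_subset hvw f
  refine ⟨fun u => ?_, (hf_fin.insert v).subset (hsupp.trans sdiff_subset),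
    hsupp.trans (sdiff_subset_sdiff_left (insert_subset hv hfS)), hind.mono subset_union_left,
    by rwa [finsum_foldMap f hf_fin]⟩
  by_cases huw : u = w
  · rw [huw, foldMap_apply_right hvw]
  by_cases huv : u = v
  · rw [huv, foldMap_apply_left hvw]; exact add_nonneg (hf₀ v) (hf₀ w)
  · rw [foldMap_apply_of_ne huv huw]; exact hf₀ u

noncomputable def foldHomotopyEquiv (hv : v ∈ S) (hvw : v ≠ w) (hadj : ¬ G.Adj v w)
    (hdom : ∀ u ∈ S, G.Adj v u → G.Adj w u) :
    indRealizationIn G S ≃ₕ indRealizationIn G (S \ {w}) where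
  toFun := ⟨fun f => ⟨foldMap v w f, foldMap_mem hv hvw hadj hdom f.2⟩,
    (continuous_foldMap.comp continuous_subtype_val).subtype_mk _⟩
  invFun := ⟨fun f => ⟨f, indRealizationIn_mono sdiff_subset f.2⟩,
    continuous_subtype_val.subtype_mk _⟩
  left_inv := homotopic_of_isIndepSet_union _ _ fun f =>
    isIndepSet_union_support_foldMap hvw hadj hdom f.2
  right_inv := by
    convert ContinuousMap.Homotopic.refl (ContinuousMap.id (indRealizationIn G (S \ {w}))) using 1
    ext f : 1
    exact Subtype.ext <| foldMap_of_eq_zero <| not_not.1 fun hfw => (f.2.2.2.1 hfw).2 rfl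

end Fold

section Radial

variable {E : Type*} [NormedAddCommGroup E] [NormedSpace ℝ E]

noncomputable def homeomorphUnitSphereOfHomogeneous (p : E → ℝ) (hp : Continuous p)
    (hsmul : ∀ (c : ℝ) (x : E), 0 ≤ c → p (c • x) = c * p x)
    (hpos : ∀ x ≠ 0, 0 < p x) :
    {x : E | p x = 1} ≃ₜ Metric.sphere (0 : E) 1 :=
  have hne (x : {x : E | p x = 1}) : (x : E) ≠ 0 := fun h => by
    have h0 : p 0 = 0 := by simpa using hsmul 0 0 le_rfl
    have hx : p x = 1 := x.2
    rw [h, h0] at hx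
    exact zero_ne_one hx
  have hne' (y : Metric.sphere (0 : E) 1) : (y : E) ≠ 0 := ne_zero_of_mem_unit_sphere y
  { toFun x := ⟨‖(x : E)‖⁻¹ • (x : E), mem_sphere_zero_iff_norm.2 <| by
      rw [norm_smul, norm_inv, norm_norm, inv_mul_cancel₀ (norm_ne_zero_iff.2 (hne x))]⟩
    invFun y := ⟨(p y)⁻¹ • (y : E), by
      change p _ = 1
      rw [hsmul _ _ (inv_nonneg.2 (hpos _ (hne' y)).le), inv_mul_cancel₀ (hpos _ (hne' y)).ne']⟩
    left_inv x := by
      ext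
      simp only
      rw [hsmul _ _ (inv_nonneg.2 (norm_nonneg _)), x.2, mul_one, inv_inv, smul_smul,
        mul_inv_cancel₀ (norm_ne_zero_iff.2 (hne x)), one_smul]
    right_inv y := by
      ext
      simp only
      rw [norm_smul, norm_inv, Real.norm_of_nonneg (hpos _ (hne' y)).le, norm_eq_of_mem_sphere y,
        mul_one, inv_inv, smul_smul, mul_inv_cancel₀ (hpos _ (hne' y)).ne', one_smul]
    continuous_toFun := by
      refine Continuous.subtype_mk (Continuous.smul ?_ continuous_subtype_val) _
      exact (continuous_subtype_val.norm).inv₀ fun x => norm_ne_zero_iff.2 (hne x)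
    continuous_invFun := by
      refine Continuous.subtype_mk (Continuous.smul ?_ continuous_subtype_val) _
      exact (hp.comp continuous_subtype_val).inv₀ fun y => (hpos _ (hne' y)).ne' }

end Radial

section CrossPolytope

def crossPolytopeBoundary (ι : Type*) [Fintype ι] : Set (EuclideanSpace ℝ ι) :=
  {x | ∑ i, |x i| = 1}

noncomputable def crossPolytopeBoundaryHomeomorphSphere (ι : Type*) [Fintype ι] :
    crossPolytopeBoundary ι ≃ₜ Metric.sphere (0 : EuclideanSpace ℝ ι) 1 :=
  homeomorphUnitSphereOfHomogeneous (fun x : EuclideanSpace ℝ ι => ∑ i, |x i|) (by fun_prop)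
    (fun c x hc => by simp [abs_mul, abs_of_nonneg hc, Finset.mul_sum])
    (fun x hx => by
      obtain ⟨i, hi⟩ : ∃ i, x i ≠ 0 := by
        by_contra! h; exact hx (PiLp.ext h)
      exact Finset.sum_pos' (fun i _ => abs_nonneg _) ⟨i, Finset.mem_univ _, abs_pos.2 hi⟩)

end CrossPolytope

section Matching

variable {V ι : Type*} {G : SimpleGraph V} {a b : ι → V}

structure IsInducedMatching (G : SimpleGraph V) (a b : ι → V) : Prop where
  injective : Injective (Sum.elim a b)
  adj : ∀ i, G.Adj (a i) (b i)
  eq_of_adj : ∀ i j, G.Adj (a i) (b j) → i = j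
  not_adj_left : ∀ i j, ¬ G.Adj (a i) (a j)
  not_adj_right : ∀ i j, ¬ G.Adj (b i) (b j)

lemma finsum_eq_sum_add_of_support_subset [Fintype ι] (hinj : Injective (Sum.elim a b))
    {f : V → ℝ} (hf : support f ⊆ range a ∪ range b) :
    ∑ᶠ v, f v = ∑ i, (f (a i) + f (b i)) := by
  calc ∑ᶠ v, f v = ∑ᶠ v ∈ range (Sum.elim a b), f v := by
        rw [finsum_mem_def, Set.indicator_eq_self.2 (hf.trans (Sum.elim_range a b).ge)]
    _ = ∑ i, (f (a i) + f (b i)) := by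
        rw [finsum_mem_range hinj, finsum_eq_sum_of_fintype, Fintype.sum_sum_type,
          Finset.sum_add_distrib]
        rfl

lemma IsInducedMatching.eq_zero_or_eq_zero (hM : IsInducedMatching G a b) {S : Set V}
    {f : V → ℝ} (hf : f ∈ indRealizationIn G S) (i : ι) : f (a i) = 0 ∨ f (b i) = 0 := by
  by_contra! h
  exact hf.2.2.2.1 h.1 h.2 (hM.adj i).ne (hM.adj i)

def toCrossPolytope (a b : ι → V) (f : V → ℝ) : EuclideanSpace ℝ ι :=
  WithLp.toLp 2 fun i => f (a i) - f (b i)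

noncomputable def ofCrossPolytope (a b : ι → V) (x : EuclideanSpace ℝ ι) : V → ℝ :=
  extend (Sum.elim a b) (Sum.elim (fun i => (x i)⁺) (fun i => (x i)⁻)) 0

lemma ofCrossPolytope_apply_left (hinj : Injective (Sum.elim a b)) (x : EuclideanSpace ℝ ι)
    (i : ι) : ofCrossPolytope a b x (a i) = (x i)⁺ :=
  hinj.extend_apply _ _ (.inl i)

lemma ofCrossPolytope_apply_right (hinj : Injective (Sum.elim a b)) (x : EuclideanSpace ℝ ι)
    (i : ι) : ofCrossPolytope a b x (b i) = (x i)⁻ :=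
  hinj.extend_apply _ _ (.inr i)

lemma ofCrossPolytope_apply_of_notMem (x : EuclideanSpace ℝ ι) {v : V}
    (hv : v ∉ range a ∪ range b) : ofCrossPolytope a b x v = 0 := by
  rw [← Sum.elim_range] at hv
  exact extend_apply' _ _ _ hv

lemma continuous_ofCrossPolytope (hinj : Injective (Sum.elim a b)) :
    Continuous (ofCrossPolytope a b) := by
  refine continuous_pi fun v => ?_
  by_cases hv : v ∈ range a ∪ range b
  · rcases hv with ⟨i, rfl⟩ | ⟨i, rfl⟩
    · simp_rw [ofCrossPolytope_apply_left hinj]; fun_prop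
    · simp_rw [ofCrossPolytope_apply_right hinj]; fun_prop
  · simp_rw [ofCrossPolytope_apply_of_notMem _ hv]; fun_prop

lemma continuous_toCrossPolytope : Continuous (toCrossPolytope (ι := ι) a b) := by
  unfold toCrossPolytope; fun_prop

lemma IsInducedMatching.toCrossPolytope_mem [Fintype ι] (hM : IsInducedMatching G a b)
    {f : V → ℝ} (hf : f ∈ indRealizationIn G (range a ∪ range b)) :
    toCrossPolytope a b f ∈ crossPolytopeBoundary ι := by
  have habs (i : ι) : |f (a i) - f (b i)| = f (a i) + f (b i) := by
    rcases hM.eq_zero_or_eq_zero hf i with h | h <;> simp [h, abs_of_nonneg (hf.1 _)]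
  obtain ⟨-, -, hfS, -, hf_sum⟩ := hf
  change ∑ i, |f (a i) - f (b i)| = 1
  simp_rw [habs]
  rwa [← finsum_eq_sum_add_of_support_subset hM.injective hfS]

lemma IsInducedMatching.ofCrossPolytope_mem [Fintype ι] (hM : IsInducedMatching G a b)
    {x : EuclideanSpace ℝ ι} (hx : x ∈ crossPolytopeBoundary ι) :
    ofCrossPolytope a b x ∈ indRealizationIn G (range a ∪ range b) := by
  have hl := ofCrossPolytope_apply_left hM.injective x
  have hr := ofCrossPolytope_apply_right hM.injective x
  have hpn (i : ι) : (x i)⁺ = 0 ∨ (x i)⁻ = 0 :=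
    (le_total (x i) 0).imp posPart_eq_zero.2 negPart_eq_zero.2
  have hsupp : support (ofCrossPolytope a b x) ⊆ range a ∪ range b := fun v hv =>
    by_contra fun h => hv (ofCrossPolytope_apply_of_notMem x h)
  refine ⟨fun v => ?_, ((finite_range a).union (finite_range b)).subset hsupp, hsupp, ?_, ?_⟩
  · by_cases hv : v ∈ range a ∪ range b
    · rcases hv with ⟨i, rfl⟩ | ⟨i, rfl⟩
      · exact hl i ▸ posPart_nonneg _
      · exact hr i ▸ negPart_nonneg _
    · exact (ofCrossPolytope_apply_of_notMem x hv).ge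
  · intro u hu v hv _ huv
    rcases hsupp hu with ⟨i, rfl⟩ | ⟨i, rfl⟩ <;>
      rcases hsupp hv with ⟨j, rfl⟩ | ⟨j, rfl⟩
    · exact hM.not_adj_left i j huv
    · obtain rfl := hM.eq_of_adj i j huv
      rw [Function.mem_support, hl] at hu
      rw [Function.mem_support, hr] at hv
      exact (hpn i).elim hu hv
    · obtain rfl := hM.eq_of_adj j i huv.symm
      rw [Function.mem_support, hr] at hu
      rw [Function.mem_support, hl] at hv
      exact (hpn j).elim hv hu
    · exact hM.not_adj_right i j huv
  · rw [finsum_eq_sum_add_of_support_subset hM.injective hsupp]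
    simp_rw [hl, hr, posPart_add_negPart]
    exact hx

lemma IsInducedMatching.ofCrossPolytope_toCrossPolytope (hM : IsInducedMatching G a b)
    {f : V → ℝ} (hf : f ∈ indRealizationIn G (range a ∪ range b)) :
    ofCrossPolytope a b (toCrossPolytope a b f) = f := by
  funext v
  by_cases hv : v ∈ range a ∪ range b
  · have hf₀ := hf.1
    rcases hv with ⟨i, rfl⟩ | ⟨i, rfl⟩
    · rw [ofCrossPolytope_apply_left hM.injective]
      rcases hM.eq_zero_or_eq_zero hf i with h | h
      · simp [toCrossPolytope, h, hf₀ (b i)]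
      · simp [toCrossPolytope, h, hf₀ (a i)]
    · rw [ofCrossPolytope_apply_right hM.injective]
      rcases hM.eq_zero_or_eq_zero hf i with h | h
      · simp [toCrossPolytope, h, hf₀ (b i)]
      · simp [toCrossPolytope, h, hf₀ (a i)]
  · rw [ofCrossPolytope_apply_of_notMem _ hv]
    exact (not_not.1 fun h => hv (hf.2.2.1 h)).symm

lemma toCrossPolytope_ofCrossPolytope (hinj : Injective (Sum.elim a b))
    (x : EuclideanSpace ℝ ι) : toCrossPolytope a b (ofCrossPolytope a b x) = x := by
  ext i
  simp [toCrossPolytope, ofCrossPolytope_apply_left hinj, ofCrossPolytope_apply_right hinj]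

noncomputable def IsInducedMatching.homeomorphCrossPolytopeBoundary [Fintype ι]
    (hM : IsInducedMatching G a b) :
    indRealizationIn G (range a ∪ range b) ≃ₜ crossPolytopeBoundary ι where
  toFun f := ⟨toCrossPolytope a b f, hM.toCrossPolytope_mem f.2⟩
  invFun x := ⟨ofCrossPolytope a b x, hM.ofCrossPolytope_mem x.2⟩
  left_inv f := Subtype.ext (hM.ofCrossPolytope_toCrossPolytope f.2)
  right_inv x := Subtype.ext (toCrossPolytope_ofCrossPolytope hM.injective x)
  continuous_toFun := (continuous_toCrossPolytope.comp continuous_subtype_val).subtype_mk _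
  continuous_invFun :=
    ((continuous_ofCrossPolytope hM.injective).comp continuous_subtype_val).subtype_mk _

end Matching

section Path

open SimpleGraph

def pathPruned (n j : ℕ) : Set (Fin n) := {v | (v : ℕ) % 3 = 2 → 3 * j ≤ v}

lemma pathPruned_zero (n : ℕ) : pathPruned n 0 = univ := by
  ext v; simp [pathPruned]

lemma pathPruned_succ {n j : ℕ} (h : 3 * j + 2 < n) :
    pathPruned n (j + 1) = pathPruned n j \ {⟨3 * j + 2, h⟩} := by
  ext v
  simp only [pathPruned, mem_ofPred_eq, mem_sdiff, mem_singleton_iff, Fin.ext_iff]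
  omega

lemma pathPruned_of_le {n j : ℕ} (h : n ≤ 3 * j + 2) :
    pathPruned n j = {v : Fin n | (v : ℕ) % 3 ≠ 2} := by
  ext v
  simp only [pathPruned, mem_ofPred_eq]
  omega

theorem nonempty_homotopyEquiv_pathPruned (n : ℕ) : ∀ j, 3 * j ≤ n →
    Nonempty (indRealization (pathGraph n) ≃ₕ indRealizationIn (pathGraph n) (pathPruned n j))
  | 0, _ => ⟨pathPruned_zero n ▸ ContinuousMap.HomotopyEquiv.refl _⟩
  | j + 1, h => by
    obtain ⟨e⟩ := nonempty_homotopyEquiv_pathPruned n j (by omega)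
    rw [pathPruned_succ (by omega)]
    refine ⟨e.trans (foldHomotopyEquiv (v := ⟨3 * j, by omega⟩) ?_ ?_ ?_ ?_)⟩
    · simp [pathPruned]
    · simp [Fin.ext_iff]
    · simp only [pathGraph_adj]
      omega
    · intro u hu hadj
      simp only [pathPruned, mem_ofPred_eq] at hu
      simp only [pathGraph_adj] at hadj ⊢
      omega

theorem nonempty_homotopyEquiv_indRealizationIn_pathGraph (n : ℕ) :
    Nonempty (indRealization (pathGraph n) ≃ₕ
      indRealizationIn (pathGraph n) {v : Fin n | (v : ℕ) % 3 ≠ 2}) :=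
  pathPruned_of_le (n := n) (j := n / 3) (by omega) ▸
    nonempty_homotopyEquiv_pathPruned n (n / 3) (by omega)

theorem contractibleSpace_indRealizationIn_pathGraph {n : ℕ} (hn : n % 3 = 1) :
    ContractibleSpace (indRealizationIn (pathGraph n) {v : Fin n | (v : ℕ) % 3 ≠ 2}) :=
  contractibleSpace_indRealizationIn_of_isolated (u := ⟨n - 1, by omega⟩) (by simp only [mem_ofPred_eq]; omega)
    fun x hx hadj => by
      simp only [mem_ofPred_eq] at hx
      simp only [pathGraph_adj] at hadj
      omega

def pathMatchingLeft {n m : ℕ} (h : 3 * m ≤ n + 1) (i : Fin m) : Fin n := ⟨3 * i, by omega⟩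

def pathMatchingRight {n m : ℕ} (h : 3 * m ≤ n + 1) (i : Fin m) : Fin n :=
  ⟨3 * i + 1, by omega⟩

lemma isInducedMatching_pathGraph {n m : ℕ} (h : 3 * m ≤ n + 1) :
    IsInducedMatching (pathGraph n) (pathMatchingLeft h) (pathMatchingRight h) where
  injective := by
    rintro (i | i) (j | j) hij <;>
      simp only [Sum.elim_inl, Sum.elim_inr, pathMatchingLeft, pathMatchingRight, Fin.ext_iff,
        Sum.inl.injEq, Sum.inr.injEq, reduceCtorEq] at hij ⊢ <;> omega
  adj i := by simp [pathGraph_adj, pathMatchingLeft, pathMatchingRight]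
  eq_of_adj i j hij := by
    simp only [pathGraph_adj, pathMatchingLeft, pathMatchingRight, Fin.ext_iff] at hij ⊢; omega
  not_adj_left i j hij := by
    simp only [pathGraph_adj, pathMatchingLeft] at hij; omega
  not_adj_right i j hij := by
    simp only [pathGraph_adj, pathMatchingRight] at hij; omega

lemma range_pathMatchingLeft_union_range_pathMatchingRight {n m : ℕ} (h₁ : 3 * m ≤ n + 1)
    (h₂ : n ≤ 3 * m) :
    range (pathMatchingLeft h₁) ∪ range (pathMatchingRight h₁) =
      {v : Fin n | (v : ℕ) % 3 ≠ 2} := by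
  ext v
  simp only [mem_union, mem_range, mem_ofPred_eq, pathMatchingLeft, pathMatchingRight,
    Fin.ext_iff]
  constructor
  · rintro (⟨i, hi⟩ | ⟨i, hi⟩) <;> omega
  · intro hv
    by_cases h0 : (v : ℕ) % 3 = 0
    · exact .inl ⟨⟨v / 3, by omega⟩, by simp only; omega⟩
    · exact .inr ⟨⟨v / 3, by omega⟩, by simp only; omega⟩

theorem nonempty_homotopyEquiv_pathGraph_sphere {n m : ℕ} (h₁ : 3 * m ≤ n + 1)
    (h₂ : n ≤ 3 * m) : Nonempty (indRealization (pathGraph n) ≃ₕ sphere' m) := by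
  obtain ⟨e⟩ := nonempty_homotopyEquiv_indRealizationIn_pathGraph n
  rw [← range_pathMatchingLeft_union_range_pathMatchingRight h₁ h₂] at e
  exact ⟨e.trans ((isInducedMatching_pathGraph h₁).homeomorphCrossPolytopeBoundary.trans
    (crossPolytopeBoundaryHomeomorphSphere _)).toHomotopyEquiv⟩

end Path

/-- homotopy type of the independence complex of the path `P_n`:
`S^{k-1}` if `n = 3k`, a point if `n = 3k+1`, and `S^k` if `n = 3k+2`. -/
theorem ind_pathGraph (n k : ℕ) :
    (n = 3 * k → Nonempty (ContinuousMap.HomotopyEquiv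
      (↥(indRealization (SimpleGraph.pathGraph n))) (↥(sphere' k)))) ∧
    (n = 3 * k + 1 → ContractibleSpace (↥(indRealization (SimpleGraph.pathGraph n)))) ∧
    (n = 3 * k + 2 → Nonempty (ContinuousMap.HomotopyEquiv
      (↥(indRealization (SimpleGraph.pathGraph n))) (↥(sphere' (k + 1))))) := by
  refine ⟨fun hn => nonempty_homotopyEquiv_pathGraph_sphere (by omega) (by omega), fun hn => ?_,
    fun hn => nonempty_homotopyEquiv_pathGraph_sphere (by omega) (by omega)⟩
  obtain ⟨e⟩ := nonempty_homotopyEquiv_indRealizationIn_pathGraph n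
  have := contractibleSpace_indRealizationIn_pathGraph (n := n) (by omega)
  exact e.contractibleSpace
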